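/- arXiv:2402.09583 — 2 statements merged into one kernel-verified Lean document; each statement's English description precedes it below -/
import Mathlib

section
/- Let m ≥ 0, b ≥ m+2 be integers and a, c > 0. Then the integral ∫_0^∞ [α]^m/[cα+a]^b dα is finite and equals -Σ_{i=1}^{b} (γ_i/c) ln(a+i-1), where γ_i are the partial-fraction residues of [α]^m/[cα+a]^b. -/
open MeasureTheory

/-- Rising Pochhammer polynomial `[x]^n = x(x+1)⋯(x+n-1)`. -/
noncomputable def rf (x : ℝ) (n : ℕ) : ℝ := ∏ s ∈ Finset.range n, (x + s)

/-- Residues of the partial fraction expansion of `[α]^m / [cα+a]^b`.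
For `m = 0` the empty product and `c^0 = 1` reduce this to `1 / ∏_{k≠i} (k-i)`. -/
noncomputable def gam (m b : ℕ) (a c : ℝ) (i : ℕ) : ℝ :=
  (∏ s ∈ Finset.Icc 1 m, (1 + ((s : ℝ) - 1) * c - a - (i : ℝ))) /
    (c ^ m * ∏ k ∈ (Finset.Icc 1 b).erase i, ((k : ℝ) - (i : ℝ)))

open Polynomial Finset Filter Real

lemma Dne {b i : ℕ} : (∏ k ∈ (Finset.Icc 1 b).erase i, ((k : ℝ) - (i : ℝ))) ≠ 0 := by
  refine Finset.prod_ne_zero_iff.2 fun k hk => ?_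
  have hki : k ≠ i := Finset.ne_of_mem_erase hk
  intro h
  exact hki (by exact_mod_cast sub_eq_zero.1 h)

lemma icc_prod_eq {m : ℕ} (f : ℕ → ℝ) :
    ∏ s ∈ Finset.Icc 1 m, f s = ∏ s ∈ Finset.range m, f (1 + s) := by
  rw [← Finset.Ico_add_one_right_eq_Icc, Finset.prod_Ico_eq_prod_range]
  simp

lemma key_poly (m b : ℕ) (hb : m + 2 ≤ b) (a c : ℝ) (hc : c ≠ 0) :
    (∏ s ∈ Finset.range m, (X + C (s : ℝ))) =
      ∑ i ∈ Finset.Icc 1 b, C (gam m b a c i) *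
        ∏ k ∈ (Finset.Icc 1 b).erase i, (C c * X + C (a + (k : ℝ) - 1)) := by
  set P : ℝ[X] := ∏ s ∈ Finset.range m, (X + C (s : ℝ)) with hP
  set Q : ℝ[X] := ∑ i ∈ Finset.Icc 1 b, C (gam m b a c i) *
        ∏ k ∈ (Finset.Icc 1 b).erase i, (C c * X + C (a + (k : ℝ) - 1)) with hQ
  have hcard : #(Finset.Icc 1 b) = b := by rw [Nat.card_Icc]; omega
  have hinj : Set.InjOn (fun i : ℕ => (1 - a - (i : ℝ)) / c) (Finset.Icc 1 b) := by
    intro i _ j _ h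
    simp only at h
    rw [div_eq_div_iff hc hc] at h
    have : (i : ℝ) = (j : ℝ) := by
      have := mul_right_cancel₀ hc h
      linarith
    exact_mod_cast this
  have hdegP : P.degree < (#(Finset.Icc 1 b) : ℕ) := by
    rw [hcard]
    have : P.degree = (m : ℕ) := by
      rw [hP, degree_prod]
      rw [Finset.sum_congr rfl (fun s _ => degree_X_add_C _), Finset.sum_const,
        Finset.card_range, nsmul_eq_mul, mul_one]
    rw [this]
    exact_mod_cast (by omega : m < b)
  have hdegQ : Q.degree < (#(Finset.Icc 1 b) : ℕ) := by
    rw [hcard]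
    have hterm : ∀ i ∈ Finset.Icc 1 b,
        (C (gam m b a c i) * ∏ k ∈ (Finset.Icc 1 b).erase i,
          (C c * X + C (a + (k : ℝ) - 1))).degree ≤ ((b - 1 : ℕ) : WithBot ℕ) := by
      intro i hi
      refine degree_le_natDegree.trans ?_
      have hn : (C (gam m b a c i) * ∏ k ∈ (Finset.Icc 1 b).erase i,
          (C c * X + C (a + (k : ℝ) - 1))).natDegree ≤ b - 1 := by
        refine natDegree_mul_le.trans ?_
        rw [natDegree_C, zero_add]
        refine (natDegree_prod_le _ _).trans ?_
        calc ∑ k ∈ (Finset.Icc 1 b).erase i, (C c * X + C (a + (k : ℝ) - 1)).natDegree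
            ≤ ∑ _k ∈ (Finset.Icc 1 b).erase i, 1 :=
              Finset.sum_le_sum
                (f := fun k => (C c * X + C (a + (k : ℝ) - 1)).natDegree)
                (g := fun _ => 1) (s := (Finset.Icc 1 b).erase i) fun k _ => natDegree_linear_le
          _ = #((Finset.Icc 1 b).erase i) := by simp
          _ = b - 1 := by rw [Finset.card_erase_of_mem hi, hcard]
      exact_mod_cast hn
    refine lt_of_le_of_lt ((degree_sum_le _ _).trans (Finset.sup_le hterm)) ?_
    exact_mod_cast (by omega : b - 1 < b)
  refine Polynomial.eq_of_degrees_lt_of_eval_index_eq _ hinj hdegP hdegQ ?_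
  intro i hi
  set x : ℝ := (1 - a - (i : ℝ)) / c with hx
  have hcx : c * x = 1 - a - (i : ℝ) := by rw [hx]; field_simp
  have hevalQ : Q.eval x = (∏ s ∈ Finset.Icc 1 m, (1 + ((s : ℝ) - 1) * c - a - (i : ℝ))) / c ^ m := by
    rw [hQ, eval_finset_sum]
    rw [Finset.sum_eq_single_of_mem i hi]
    · rw [eval_mul, eval_C, eval_prod]
      have : ∀ k ∈ (Finset.Icc 1 b).erase i,
          (C c * X + C (a + (k : ℝ) - 1)).eval x = (k : ℝ) - (i : ℝ) := by
        intro k _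
        simp only [eval_add, eval_mul, eval_C, eval_X]
        rw [hcx]; ring
      rw [Finset.prod_congr rfl this, gam]
      rw [div_mul_eq_mul_div, mul_comm (c ^ m), ← div_div, mul_div_assoc,
        div_self (Dne (b := b) (i := i)), mul_one]
    · intro j _ hji
      rw [eval_mul]
      have : (∏ k ∈ (Finset.Icc 1 b).erase j, (C c * X + C (a + (k : ℝ) - 1))).eval x = 0 := by
        rw [eval_prod]
        refine Finset.prod_eq_zero (Finset.mem_erase.2 ⟨hji.symm, hi⟩) ?_
        simp only [eval_add, eval_mul, eval_C, eval_X]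
        rw [hcx]; ring
      rw [this, mul_zero]
  have hevalP : P.eval x = (∏ s ∈ Finset.Icc 1 m, (1 + ((s : ℝ) - 1) * c - a - (i : ℝ))) / c ^ m := by
    rw [hP, eval_prod]
    simp only [eval_add, eval_X, eval_C]
    rw [icc_prod_eq (fun s => 1 + ((s : ℝ) - 1) * c - a - (i : ℝ))]
    rw [eq_div_iff (pow_ne_zero m hc)]
    have : (c : ℝ) ^ m = ∏ _s ∈ Finset.range m, c := by
      rw [Finset.prod_const, Finset.card_range]
    rw [this, ← Finset.prod_mul_distrib]
    refine Finset.prod_congr rfl fun s _ => ?_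
    push_cast
    rw [hx]
    field_simp
    ring
  rw [hevalP, hevalQ]

lemma gam_sum_zero (m b : ℕ) (hb : m + 2 ≤ b) (a c : ℝ) (hc : c ≠ 0) :
    ∑ i ∈ Finset.Icc 1 b, gam m b a c i = 0 := by
  have hcard : #(Finset.Icc 1 b) = b := by rw [Nat.card_Icc]; omega
  have h := key_poly m b hb a c hc
  have hco := congrArg (fun p : Polynomial ℝ => p.coeff (b - 1)) h
  simp only [finset_sum_coeff, coeff_C_mul] at hco
  have hL : (∏ s ∈ Finset.range m, (X + C (s : ℝ))).coeff (b - 1) = 0 := by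
    apply coeff_eq_zero_of_natDegree_lt
    refine lt_of_le_of_lt ?_ (show m < b - 1 by omega)
    refine (natDegree_prod_le _ _).trans (le_of_eq ?_)
    have h1 : ∀ s ∈ Finset.range m, (X + C (s : ℝ)).natDegree = 1 :=
      fun s _ => natDegree_X_add_C _
    rw [Finset.sum_congr rfl h1, Finset.sum_const, Finset.card_range, smul_eq_mul, mul_one]
  have hE : ∀ i ∈ Finset.Icc 1 b,
      (∏ k ∈ (Finset.Icc 1 b).erase i, (C c * X + C (a + (k : ℝ) - 1))).coeff (b - 1)
        = c ^ (b - 1) := by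
    intro i hi
    have hcd : #((Finset.Icc 1 b).erase i) = b - 1 := by
      rw [Finset.card_erase_of_mem hi, hcard]
    have hcp := coeff_prod_of_natDegree_le (s := (Finset.Icc 1 b).erase i)
      (fun k => C c * X + C (a + (k : ℝ) - 1)) 1 (fun p _ => natDegree_linear_le)
    rw [hcd, mul_one] at hcp
    rw [hcp]
    have hone : ∀ k ∈ (Finset.Icc 1 b).erase i,
        (C c * X + C (a + (k : ℝ) - 1)).coeff 1 = c := by
      intro k _
      rw [coeff_add, coeff_C_mul, coeff_X_one, mul_one, coeff_C]
      simp
    rw [Finset.prod_congr rfl hone, Finset.prod_const, hcd]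
  rw [hL, Finset.sum_congr rfl (fun i hi => by rw [hE i hi])] at hco
  rw [← Finset.sum_mul] at hco
  have hcb : c ^ (b - 1) ≠ 0 := pow_ne_zero _ hc
  have := hco.symm
  rcases mul_eq_zero.1 this with h0 | h0
  · exact h0
  · exact absurd h0 hcb

theorem pochhammer_normalizing_constant (m b : ℕ) (hb : m + 2 ≤ b) (a c : ℝ)
    (ha : 0 < a) (hc : 0 < c) :
    IntegrableOn (fun α : ℝ => rf α m / rf (c * α + a) b) (Set.Ioi 0) volume ∧
      ∫ α in Set.Ioi (0 : ℝ), rf α m / rf (c * α + a) b =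
        -∑ i ∈ Finset.Icc 1 b, gam m b a c i / c * Real.log (a + (i : ℝ) - 1) := by
  have hc' : c ≠ 0 := ne_of_gt hc
  have hden : ∀ x : ℝ, 0 ≤ x → ∀ k ∈ Finset.Icc 1 b, 0 < c * x + (a + (k : ℝ) - 1) := by
    intro x hx k hk
    rw [Finset.mem_Icc] at hk
    have h1 : (1 : ℝ) ≤ (k : ℝ) := by exact_mod_cast hk.1
    nlinarith [mul_nonneg hc.le hx]
  have hrfden : ∀ x : ℝ,
      rf (c * x + a) b = ∏ k ∈ Finset.Icc 1 b, (c * x + (a + (k : ℝ) - 1)) := by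
    intro x
    rw [rf, icc_prod_eq (fun k => c * x + (a + (k : ℝ) - 1))]
    refine Finset.prod_congr rfl fun j _ => by push_cast; ring
  have hrfpos : ∀ x : ℝ, 0 ≤ x → 0 < rf (c * x + a) b := by
    intro x hx; rw [hrfden]; exact Finset.prod_pos (hden x hx)
  -- partial fractions
  have hpf : ∀ x : ℝ, 0 ≤ x → rf x m / rf (c * x + a) b
      = ∑ i ∈ Finset.Icc 1 b, gam m b a c i / (c * x + (a + (i : ℝ) - 1)) := by
    intro x hx
    have hkey := congrArg (Polynomial.eval x) (key_poly m b hb a c hc')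
    rw [Polynomial.eval_prod, Polynomial.eval_finset_sum] at hkey
    simp only [Polynomial.eval_mul, Polynomial.eval_C, Polynomial.eval_prod,
      Polynomial.eval_add, Polynomial.eval_X] at hkey
    rw [rf, hkey, hrfden, Finset.sum_div]
    refine Finset.sum_congr rfl fun i hi => ?_
    have hE : (∏ k ∈ (Finset.Icc 1 b).erase i, (c * x + (a + (k : ℝ) - 1))) ≠ 0 :=
      ne_of_gt (Finset.prod_pos fun k hk => hden x hx k (Finset.mem_of_mem_erase hk))
    rw [← Finset.mul_prod_erase _ _ hi]
    rw [mul_comm (gam m b a c i), mul_comm (c * x + (a + (i : ℝ) - 1)),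
      mul_div_mul_left _ _ hE]
  set F : ℝ → ℝ := fun x => ∑ i ∈ Finset.Icc 1 b,
    gam m b a c i / c * Real.log (c * x + (a + (i : ℝ) - 1)) with hF
  have hderiv : ∀ x ∈ Set.Ici (0 : ℝ),
      HasDerivAt F (rf x m / rf (c * x + a) b) x := by
    intro x hx
    rw [hpf x hx]
    refine HasDerivAt.fun_sum fun i hi => ?_
    have h1 : HasDerivAt (fun y : ℝ => c * y + (a + (i : ℝ) - 1)) c x := by
      simpa using ((hasDerivAt_id x).const_mul c).add_const (a + (i : ℝ) - 1)
    have h2 := (h1.log (ne_of_gt (hden x hx i hi))).const_mul (gam m b a c i / c)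
    convert h2 using 1
    have := ne_of_gt (hden x hx i hi)
    case e'_4 => rfl
    field_simp
  have hpos : ∀ x ∈ Set.Ioi (0 : ℝ), 0 ≤ rf x m / rf (c * x + a) b := by
    intro x hx
    have hx0 : (0 : ℝ) ≤ x := le_of_lt hx
    refine div_nonneg ?_ (hrfpos x hx0).le
    exact Finset.prod_nonneg fun s _ => by positivity
  have hsum0 : ∑ i ∈ Finset.Icc 1 b, gam m b a c i = 0 := gam_sum_zero m b hb a c hc'
  have hFeq : F = fun x => ∑ i ∈ Finset.Icc 1 b, gam m b a c i / c *
      (Real.log (c * x + (a + (i : ℝ) - 1)) - Real.log (c * x + a)) := by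
    funext x
    rw [hF]
    simp only [mul_sub]
    rw [Finset.sum_sub_distrib]
    have h3 : ∑ i ∈ Finset.Icc 1 b, gam m b a c i / c * Real.log (c * x + a)
        = (∑ i ∈ Finset.Icc 1 b, gam m b a c i) / c * Real.log (c * x + a) := by
      rw [Finset.sum_div, Finset.sum_mul]
    rw [h3, hsum0]
    simp
  have htend : Tendsto F atTop (nhds 0) := by
    rw [hFeq]
    have h0 : (0 : ℝ) = ∑ i ∈ Finset.Icc 1 b, (0 : ℝ) := by simp
    rw [h0]
    refine tendsto_finset_sum _ fun i hi => ?_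
    have hlin : Tendsto (fun x : ℝ => c * x + a) atTop atTop :=
      Filter.tendsto_atTop_add_const_right _ a (Filter.Tendsto.const_mul_atTop hc tendsto_id)
    have hfrac : Tendsto (fun x : ℝ => (c * x + (a + (i : ℝ) - 1)) / (c * x + a))
        atTop (nhds 1) := by
      have h1 : Tendsto (fun x : ℝ => 1 + ((a + (i : ℝ) - 1) - a) / (c * x + a))
          atTop (nhds (1 + 0)) :=
        tendsto_const_nhds.add (Filter.Tendsto.div_atTop tendsto_const_nhds hlin)
      rw [add_zero] at h1
      refine Tendsto.congr' ?_ h1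
      filter_upwards [Filter.eventually_ge_atTop (0 : ℝ)] with x hx
      have hne : c * x + a ≠ 0 := ne_of_gt (by nlinarith)
      field_simp
      ring
    have hlog : Tendsto (fun x : ℝ =>
        Real.log ((c * x + (a + (i : ℝ) - 1)) / (c * x + a))) atTop (nhds 0) := by
      have := (Real.continuousAt_log one_ne_zero).tendsto.comp hfrac
      simpa [Function.comp_def] using this
    have hterm := hlog.const_mul (gam m b a c i / c)
    rw [mul_zero] at hterm
    refine Tendsto.congr' ?_ hterm
    filter_upwards [Filter.eventually_ge_atTop (0 : ℝ)] with x hx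
    rw [Real.log_div (ne_of_gt (hden x hx i hi))
      (ne_of_gt (by nlinarith : (0:ℝ) < c * x + a))]
  constructor
  · exact integrableOn_Ioi_deriv_of_nonneg' hderiv hpos htend
  · rw [integral_Ioi_of_hasDerivAt_of_nonneg' hderiv hpos htend, zero_sub, hF]
    congr 1
    refine Finset.sum_congr rfl fun i hi => ?_
    norm_num
end

section
/- For the Pochhammer prior PH(m=0, a=1, b, c=1) with density proportional to 1/[α+1]^b = α/[α]^{b+1} on (0,∞), if α_b is distributed according to this density, then α_b · log b converges in distribution to an Exponential(1) random variable as b → ∞. -/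
open MeasureTheory Filter Set
set_option maxHeartbeats 1000000

lemma rf_pos {x : ℝ} (hx : 0 < x) (n : ℕ) : 0 < rf x n := by
  apply Finset.prod_pos; intro i _
  have : (0:ℝ) ≤ i := Nat.cast_nonneg i
  linarith

lemma rf_one_le {x : ℝ} (hx : 1 ≤ x) (n : ℕ) : 1 ≤ rf x n := by
  rw [rf, show (1:ℝ) = ∏ _s ∈ Finset.range n, (1:ℝ) by simp]
  apply Finset.prod_le_prod (by intros; norm_num)
  intro i _
  have : (0:ℝ) ≤ i := Nat.cast_nonneg i
  linarith

lemma rf_succ (x : ℝ) (n : ℕ) : rf x (n+1) = rf x n * (x + n) := by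
  rw [rf, rf, Finset.prod_range_succ]

lemma rf_succ' (x : ℝ) (n : ℕ) : rf x (n+1) = x * rf (x+1) n := by
  rw [rf, rf, Finset.prod_range_succ']
  rw [mul_comm]
  congr 1
  · simp
  · exact Finset.prod_congr rfl (fun i _ => by push_cast; ring)

lemma rf_continuous (n : ℕ) : Continuous (fun α : ℝ => rf (α+1) n) := by
  unfold rf
  exact continuous_finset_prod _ (fun i _ => by continuity)

lemma rf_mono {x y : ℝ} (hx : 0 < x) (hxy : x ≤ y) (n : ℕ) : rf x n ≤ rf y n := by
  apply Finset.prod_le_prod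
  · intro i _; have : (0:ℝ) ≤ i := Nat.cast_nonneg i; linarith
  · intro i _; linarith

lemma tele {α : ℝ} (hα : 0 < α + 1) (n : ℕ) :
    (n:ℝ) / rf (α+1) (n+1) = 1 / rf (α+1) n - 1 / rf (α+2) n := by
  have h1 : rf (α+1) (n+1) = rf (α+1) n * (α+1+n) := rf_succ _ _
  have h2 : rf (α+1) (n+1) = (α+1) * rf (α+2) n := by
    have := rf_succ' (α+1) n
    rwa [show α+1+1 = α+2 by ring] at this
  have pA : 0 < rf (α+1) n := rf_pos hα n
  have pB : 0 < rf (α+2) n := rf_pos (by linarith) n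
  have hn : (0:ℝ) < α+1+n := by have : (0:ℝ) ≤ n := Nat.cast_nonneg n; linarith
  have key : (α+1) * rf (α+2) n = rf (α+1) n * (α+1+n) := by rw [← h1, ← h2]
  rw [h1]
  field_simp
  nlinarith [key]

lemma rf_meas (n : ℕ) : Measurable (fun α : ℝ => 1 / rf (α+1) n) :=
  measurable_const.div (rf_continuous n).measurable

lemma intOn_Ioc {n : ℕ} {t a d : ℝ} (ht : 0 ≤ t) (ha : 0 ≤ a) :
    IntegrableOn (fun s => 1 / rf (s + t + 1) n) (Set.Ioc a d) := by
  apply Measure.integrableOn_of_bounded (M := 1) measure_Ioc_lt_top.ne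
  · exact ((measurable_const.div ((rf_continuous n).measurable.comp
      (measurable_id.add_const t)))).aestronglyMeasurable
  · filter_upwards [ae_restrict_mem measurableSet_Ioc] with s hs
    have h1 : 1 ≤ rf (s + t + 1) n := by
      have := rf_one_le (x := s + t + 1) (by have := hs.1; linarith) n
      exact this
    rw [Real.norm_eq_abs, abs_of_nonneg (by positivity)]
    rw [div_le_one (by linarith)]
    exact h1

lemma rf_ge_sq {α : ℝ} (hα : 1 ≤ α) {n : ℕ} (hn : 2 ≤ n) : α^2 ≤ rf (α+1) n := by
  obtain ⟨m, rfl⟩ : ∃ m, n = m + 2 := ⟨n - 2, by omega⟩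
  have h1 : rf (α+1) (m+1+1) = (α+1) * rf (α+2) (m+1) := by
    have := rf_succ' (α+1) (m+1); rwa [show α+1+1 = α+2 by ring] at this
  have h2 : rf (α+2) (m+1) = (α+2) * rf (α+3) m := by
    have := rf_succ' (α+2) m; rwa [show α+2+1 = α+3 by ring] at this
  have h3 : 1 ≤ rf (α+3) m := rf_one_le (by linarith) m
  have h4 : (0:ℝ) < α := by linarith
  rw [h1, h2]
  nlinarith

lemma intOn_Ioi {n : ℕ} (hn : 2 ≤ n) {t : ℝ} (ht : 0 ≤ t) :
    IntegrableOn (fun α => 1 / rf (α+1) n) (Set.Ioi t) := by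
  have h0 : IntegrableOn (fun α => 1 / rf (α+1) n) (Set.Ioi 0) := by
    rw [← Set.Ioc_union_Ioi_eq_Ioi (zero_le_one), integrableOn_union]
    constructor
    · have := intOn_Ioc (n := n) (t := 0) (a := 0) (d := 1) le_rfl le_rfl
      simpa using this
    · apply Integrable.mono' (g := fun a : ℝ => a ^ (-2:ℝ))
        (integrableOn_Ioi_rpow_of_lt (by norm_num) one_pos)
        (rf_meas n).aestronglyMeasurable
      filter_upwards [ae_restrict_mem measurableSet_Ioi] with α hα
      have hα1 : (1:ℝ) ≤ α := le_of_lt hα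
      have h2 : α^2 ≤ rf (α+1) n := rf_ge_sq hα1 hn
      have hp : (0:ℝ) < α^2 := by positivity
      have hr : 0 < rf (α+1) n := rf_pos (by linarith) n
      rw [Real.norm_eq_abs, abs_of_nonneg (by positivity)]
      rw [Real.rpow_neg (by linarith), show (2:ℝ) = ((2:ℕ):ℝ) by norm_num,
        Real.rpow_natCast]
      rw [one_div, inv_le_inv₀ hr hp]
      exact h2
  exact h0.mono_set (Set.Ioi_subset_Ioi ht)

lemma shift_Ioi (h : ℝ → ℝ) (t c : ℝ) :
    ∫ α in Set.Ioi t, h (α + c) = ∫ α in Set.Ioi (t + c), h α := by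
  rw [← integral_indicator measurableSet_Ioi, ← integral_indicator measurableSet_Ioi,
    ← integral_add_right_eq_self ((Set.Ioi (t+c)).indicator h) c]
  congr 1
  funext α
  simp only [Set.indicator_apply, Set.mem_Ioi, add_lt_add_iff_right]

lemma shift_Ioc (h : ℝ → ℝ) (a d c : ℝ) :
    ∫ s in Set.Ioc a d, h (s + c) = ∫ s in Set.Ioc (a + c) (d + c), h s := by
  rw [← integral_indicator measurableSet_Ioc, ← integral_indicator measurableSet_Ioc,
    ← integral_add_right_eq_self ((Set.Ioc (a+c) (d+c)).indicator h) c]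
  congr 1
  funext s
  simp only [Set.indicator_apply, Set.mem_Ioc, add_lt_add_iff_right, add_le_add_iff_right]

lemma shift_integrableOn (h : ℝ → ℝ) (t c : ℝ)
    (hint : IntegrableOn h (Set.Ioi (t + c))) :
    IntegrableOn (fun α => h (α + c)) (Set.Ioi t) := by
  rw [← integrable_indicator_iff measurableSet_Ioi] at hint ⊢
  have := hint.comp_add_right c
  apply this.congr'
  · exact this.aestronglyMeasurable.congr (by
      filter_upwards with α
      simp only [Set.indicator_apply, Set.mem_Ioi, add_lt_add_iff_right])
  · filter_upwards with α
    simp only [Set.indicator_apply, Set.mem_Ioi, add_lt_add_iff_right]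

lemma key_integral {n : ℕ} (hn : 2 ≤ n) {t : ℝ} (ht : 0 ≤ t) :
    (n:ℝ) * ∫ α in Set.Ioi t, 1 / rf (α+1) (n+1) =
      ∫ α in Set.Ioc t (t+1), 1 / rf (α+1) n := by
  have hA : IntegrableOn (fun α => 1 / rf (α+1) n) (Set.Ioi t) := intOn_Ioi hn ht
  have hA' : IntegrableOn (fun α => 1 / rf (α+1) n) (Set.Ioi (t+1)) :=
    intOn_Ioi hn (by linarith)
  have hfun : (fun α : ℝ => (fun β : ℝ => 1 / rf (β+1) n) (α + 1)) =
      (fun α : ℝ => 1 / rf (α+2) n) := by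
    funext α; simp only []; rw [show α + 1 + 1 = α + 2 by ring]
  have hB : IntegrableOn (fun α => 1 / rf (α+2) n) (Set.Ioi t) := by
    rw [← hfun]; exact shift_integrableOn (fun β : ℝ => 1 / rf (β+1) n) t 1 hA'
  have step1 : (n:ℝ) * ∫ α in Set.Ioi t, 1 / rf (α+1) (n+1) =
      ∫ α in Set.Ioi t, (1 / rf (α+1) n - 1 / rf (α+2) n) := by
    rw [← integral_const_mul]
    apply setIntegral_congr_fun measurableSet_Ioi
    intro α hα
    have hα1 : 0 < α + 1 := by simp only [Set.mem_Ioi] at hα; linarith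
    show (n:ℝ) * (1 / rf (α + 1) (n + 1)) = 1 / rf (α + 1) n - 1 / rf (α + 2) n
    rw [mul_one_div, ← tele hα1 n]
  have step2 : ∫ α in Set.Ioi t, (1 / rf (α+1) n - 1 / rf (α+2) n) =
      (∫ α in Set.Ioi t, 1 / rf (α+1) n) - ∫ α in Set.Ioi t, 1 / rf (α+2) n :=
    integral_sub hA hB
  have step3 : ∫ α in Set.Ioi t, 1 / rf (α+2) n =
      ∫ α in Set.Ioi (t+1), 1 / rf (α+1) n := by
    rw [← shift_Ioi (fun β => 1 / rf (β+1) n) t 1, hfun]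
  have split : (∫ α in Set.Ioi t, 1 / rf (α+1) n) =
      (∫ α in Set.Ioc t (t+1), 1 / rf (α+1) n) +
        ∫ α in Set.Ioi (t+1), 1 / rf (α+1) n := by
    rw [← setIntegral_union (Set.Ioc_disjoint_Ioi le_rfl) measurableSet_Ioi
      (hA.mono_set Set.Ioc_subset_Ioi_self) hA',
      Set.Ioc_union_Ioi_eq_Ioi (by linarith : t ≤ t + 1)]
  rw [step1, step2, step3, split]
  ring

lemma prod_lower {n : ℕ} {t s : ℝ} (ht : 0 ≤ t) (hs : 0 ≤ s) :
    rf 1 n * rf (s+t+1) n ≤ rf (s+1) n * rf (t+1) n := by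
  rw [rf, rf, rf, rf, ← Finset.prod_mul_distrib, ← Finset.prod_mul_distrib]
  apply Finset.prod_le_prod
  · intro i _
    have h0 : (0:ℝ) ≤ i := Nat.cast_nonneg i
    have : (0:ℝ) ≤ 1 + i := by linarith
    nlinarith
  · intro i _
    have h0 : (0:ℝ) ≤ i := Nat.cast_nonneg i
    nlinarith [mul_nonneg hs ht]

lemma prod_upper {n : ℕ} {t s : ℝ} (ht : 0 ≤ t) (hs0 : 0 ≤ s) (hs1 : s ≤ 1) :
    rf (s+1) n * rf (t+2) n ≤ rf 2 n * rf (s+t+1) n := by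
  rw [rf, rf, rf, rf, ← Finset.prod_mul_distrib, ← Finset.prod_mul_distrib]
  apply Finset.prod_le_prod
  · intro i _
    have h0 : (0:ℝ) ≤ i := Nat.cast_nonneg i
    nlinarith [mul_nonneg ht h0, mul_nonneg hs0 h0]
  · intro i _
    have h0 : (0:ℝ) ≤ i := Nat.cast_nonneg i
    nlinarith [mul_nonneg ht (by linarith : (0:ℝ) ≤ 1 - s)]

lemma f_lower {n : ℕ} {t s : ℝ} (ht : 0 ≤ t) (hs : 0 ≤ s) :
    rf 1 n / rf (t+1) n * (1 / rf (s+1) n) ≤ 1 / rf (s+t+1) n := by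
  have p1 : 0 < rf 1 n := rf_pos one_pos n
  have p2 : 0 < rf (t+1) n := rf_pos (by linarith) n
  have p3 : 0 < rf (s+1) n := rf_pos (by linarith) n
  have p4 : 0 < rf (s+t+1) n := rf_pos (by linarith) n
  rw [div_mul_div_comm, mul_one, div_le_div_iff₀ (by positivity) p4, one_mul,
    mul_comm (rf (t+1) n)]
  exact prod_lower ht hs

lemma f_upper {n : ℕ} {t s : ℝ} (ht : 0 ≤ t) (hs0 : 0 ≤ s) (hs1 : s ≤ 1) :
    1 / rf (s+t+1) n ≤ rf 2 n / rf (t+2) n * (1 / rf (s+1) n) := by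
  have p1 : 0 < rf 2 n := rf_pos two_pos n
  have p2 : 0 < rf (t+2) n := rf_pos (by linarith) n
  have p3 : 0 < rf (s+1) n := rf_pos (by linarith) n
  have p4 : 0 < rf (s+t+1) n := rf_pos (by linarith) n
  rw [div_mul_div_comm, mul_one, div_le_div_iff₀ p4 (by positivity), one_mul]
  nlinarith [prod_upper (n := n) ht hs0 hs1]

lemma intOn_Ioc01 (n : ℕ) : IntegrableOn (fun s => 1 / rf (s+1) n) (Set.Ioc (0:ℝ) 1) := by
  have := intOn_Ioc (n := n) (t := 0) (a := 0) (d := 1) le_rfl le_rfl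
  simpa using this

lemma B_lower (n : ℕ) : 1 / rf 2 n ≤ ∫ s in Set.Ioc (0:ℝ) 1, 1 / rf (s+1) n := by
  have hint := intOn_Ioc01 n
  have hconst : IntegrableOn (fun _ : ℝ => 1 / rf 2 n) (Set.Ioc (0:ℝ) 1) :=
    integrableOn_const measure_Ioc_lt_top.ne
  calc 1 / rf 2 n = ∫ _s in Set.Ioc (0:ℝ) 1, (1 / rf 2 n) := by
        simp [Real.volume_Ioc]
    _ ≤ _ := by
        apply setIntegral_mono_on hconst hint measurableSet_Ioc
        intro s hs
        have p3 : 0 < rf (s+1) n := rf_pos (by linarith [hs.1]) n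
        apply one_div_le_one_div_of_le p3
        exact rf_mono (by linarith [hs.1]) (by linarith [hs.2]) n

lemma intOn_Ioc01' (n : ℕ) {t : ℝ} (ht : 0 ≤ t) :
    IntegrableOn (fun s => 1 / rf (s+t+1) n) (Set.Ioc (0:ℝ) 1) := by
  have := intOn_Ioc (n := n) (t := t) (a := 0) (d := 1) ht le_rfl
  simpa using this

lemma A_lower {n : ℕ} {t : ℝ} (ht : 0 ≤ t) :
    rf 1 n / rf (t+1) n * ∫ s in Set.Ioc (0:ℝ) 1, 1 / rf (s+1) n ≤
      ∫ s in Set.Ioc (0:ℝ) 1, 1 / rf (s+t+1) n := by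
  rw [← integral_const_mul]
  apply setIntegral_mono_on ((intOn_Ioc01 n).const_mul _) (intOn_Ioc01' n ht)
    measurableSet_Ioc
  intro s hs
  exact f_lower ht (le_of_lt hs.1)

lemma A_upper {n : ℕ} {t : ℝ} (ht : 0 ≤ t) :
    (∫ s in Set.Ioc (0:ℝ) 1, 1 / rf (s+t+1) n) ≤
      rf 2 n / rf (t+2) n * ∫ s in Set.Ioc (0:ℝ) 1, 1 / rf (s+1) n := by
  rw [← integral_const_mul]
  apply setIntegral_mono_on (intOn_Ioc01' n ht) ((intOn_Ioc01 n).const_mul _)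
    measurableSet_Ioc
  intro s hs
  exact f_upper ht (le_of_lt hs.1) hs.2

lemma L_est {n : ℕ} {t : ℝ} (ht : 0 ≤ t) :
    Real.exp (-(t * ∑ i ∈ Finset.range n, ((i:ℝ)+1)⁻¹)) ≤ rf 1 n / rf (t+1) n := by
  have p1 : 0 < rf 1 n := rf_pos one_pos n
  have p2 : 0 < rf (t+1) n := rf_pos (by linarith) n
  rw [le_div_iff₀ p2]
  have key : rf (t+1) n ≤ rf 1 n * Real.exp (t * ∑ i ∈ Finset.range n, ((i:ℝ)+1)⁻¹) := by
    rw [Finset.mul_sum, Real.exp_sum, rf, rf, ← Finset.prod_mul_distrib]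
    apply Finset.prod_le_prod
    · intro i _
      have h0 : (0:ℝ) ≤ i := Nat.cast_nonneg i
      linarith
    · intro i _
      have h0 : (0:ℝ) ≤ i := Nat.cast_nonneg i
      have he := Real.add_one_le_exp (t * ((i:ℝ)+1)⁻¹)
      have hid : ((i:ℝ)+1) * (t * ((i:ℝ)+1)⁻¹) = t := by field_simp
      nlinarith [Real.exp_pos (t * ((i:ℝ)+1)⁻¹)]
  calc Real.exp (-(t * ∑ i ∈ Finset.range n, ((i:ℝ)+1)⁻¹)) * rf (t+1) n
      ≤ Real.exp (-(t * ∑ i ∈ Finset.range n, ((i:ℝ)+1)⁻¹)) *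
        (rf 1 n * Real.exp (t * ∑ i ∈ Finset.range n, ((i:ℝ)+1)⁻¹)) := by
        apply mul_le_mul_of_nonneg_left key (le_of_lt (Real.exp_pos _))
    _ = rf 1 n := by
        rw [Real.exp_neg]
        field_simp

lemma U_est {n : ℕ} {t : ℝ} (ht : 0 ≤ t) :
    rf 2 n / rf (t+2) n ≤
      Real.exp (-(t/(1+t) * ∑ i ∈ Finset.range n, ((i:ℝ)+2)⁻¹)) := by
  have p2 : 0 < rf (t+2) n := rf_pos (by linarith) n
  rw [div_le_iff₀ p2]
  have hsum : -(t/(1+t) * ∑ i ∈ Finset.range n, ((i:ℝ)+2)⁻¹) =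
      ∑ i ∈ Finset.range n, -(t/(1+t) * ((i:ℝ)+2)⁻¹) := by
    rw [Finset.mul_sum, ← Finset.sum_neg_distrib]
  rw [hsum, Real.exp_sum, rf, rf, ← Finset.prod_mul_distrib]
  apply Finset.prod_le_prod
  · intro i _
    have h0 : (0:ℝ) ≤ i := Nat.cast_nonneg i
    linarith
  · intro i _
    have h0 : (0:ℝ) ≤ i := Nat.cast_nonneg i
    have h1t : (0:ℝ) < 1 + t := by linarith
    have h2u : (0:ℝ) < (i:ℝ) + 2 := by linarith
    set v := t/(1+t) * ((i:ℝ)+2)⁻¹ with hv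
    have hv0 : 0 ≤ v := by positivity
    have hvle : (t + 2 + (i:ℝ)) * v ≤ t := by
      rw [hv, show t/(1+t) * ((i:ℝ)+2)⁻¹ = t / ((1+t) * ((i:ℝ)+2)) by
        field_simp, mul_div_assoc']
      rw [div_le_iff₀ (by positivity)]
      nlinarith [mul_nonneg ht ht, mul_nonneg ht h0]
    have he := Real.add_one_le_exp (-v)
    have hm := mul_le_mul_of_nonneg_right he (show (0:ℝ) ≤ t + 2 + (i:ℝ) by linarith)
    nlinarith [hm, hvle]

lemma Hsum_eq (n : ℕ) :
    ((harmonic n : ℚ) : ℝ) = ∑ i ∈ Finset.range n, ((i:ℝ)+1)⁻¹ := by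
  rw [harmonic]
  push_cast
  rfl

lemma Hsum_le (n : ℕ) :
    ∑ i ∈ Finset.range n, ((i:ℝ)+1)⁻¹ ≤ 1 + Real.log n := by
  have h := harmonic_le_one_add_log n
  rw [Hsum_eq] at h
  exact h

lemma Hsum_ge (n : ℕ) :
    Real.log ((n:ℝ)+1) ≤ ∑ i ∈ Finset.range n, ((i:ℝ)+1)⁻¹ := by
  have h := log_add_one_le_harmonic n
  rw [Hsum_eq] at h
  have e : ((n:ℝ)+1) = ((n+1 : ℕ) : ℝ) := by push_cast; ring
  rw [e]
  exact h

lemma Hsum_shift (n : ℕ) :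
    ∑ i ∈ Finset.range n, ((i:ℝ)+2)⁻¹ =
      (∑ i ∈ Finset.range (n+1), ((i:ℝ)+1)⁻¹) - 1 := by
  rw [Finset.sum_range_succ' (fun i => ((i:ℝ)+1)⁻¹)]
  have : ∀ i : ℕ, (((i+1 : ℕ):ℝ)+1)⁻¹ = ((i:ℝ)+2)⁻¹ := by
    intro i; push_cast; ring_nf
  simp only [this, Nat.cast_zero, zero_add, inv_one]
  ring

/-- If `α_b` has the `PH(m=0, a=1, b, c=1)` distribution, with density
proportional to `1/[α+1]^b` on `(0,∞)`, then `α_b · log b` converges in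
distribution to `Exp(1)`: for every `x > 0`,
`P(α_b > x / log b) → e^{-x}` as `b → ∞`. -/
theorem half_horseshoe_scaling_limit_exponential (x : ℝ) (hx : 0 < x) :
    Tendsto (fun b : ℕ =>
        (∫ α in Set.Ioi (x / Real.log b), 1 / rf (α + 1) b) /
          (∫ α in Set.Ioi (0 : ℝ), 1 / rf (α + 1) b))
      atTop (nhds (Real.exp (-x))) := by
  have htt : Tendsto (fun b : ℕ => x / Real.log b) atTop (nhds 0) := by
    have hlog : Tendsto (fun b : ℕ => Real.log b) atTop atTop :=
      Real.tendsto_log_atTop.comp tendsto_natCast_atTop_atTop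
    have h1 := hlog.inv_tendsto_atTop
    have h2 : Tendsto (fun b : ℕ => x * (Real.log b)⁻¹) atTop (nhds (x * 0)) :=
      tendsto_const_nhds.mul h1
    rw [mul_zero] at h2
    simpa [div_eq_mul_inv] using h2
  have hlow : Tendsto (fun b : ℕ => Real.exp (-x - x / Real.log b)) atTop
      (nhds (Real.exp (-x))) := by
    have h : Tendsto (fun b : ℕ => -x - x / Real.log b) atTop (nhds (-x - 0)) :=
      tendsto_const_nhds.sub htt
    rw [sub_zero] at h
    exact (Real.continuous_exp.tendsto _).comp h
  have hupp : Tendsto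
      (fun b : ℕ => Real.exp (-((x - x / Real.log b) / (1 + x / Real.log b)))) atTop
      (nhds (Real.exp (-x))) := by
    have h1 : Tendsto (fun b : ℕ => x - x / Real.log b) atTop (nhds (x - 0)) :=
      tendsto_const_nhds.sub htt
    have h2 : Tendsto (fun b : ℕ => 1 + x / Real.log b) atTop (nhds (1 + 0)) :=
      tendsto_const_nhds.add htt
    rw [sub_zero] at h1; rw [add_zero] at h2
    have h3 := (h1.div h2 one_ne_zero).neg
    rw [div_one] at h3
    exact (Real.continuous_exp.tendsto _).comp h3
  have main : ∀ b : ℕ, 3 ≤ b →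
      Real.exp (-x - x / Real.log b) ≤
        (∫ α in Set.Ioi (x / Real.log b), 1 / rf (α + 1) b) /
          (∫ α in Set.Ioi (0 : ℝ), 1 / rf (α + 1) b) ∧
      (∫ α in Set.Ioi (x / Real.log b), 1 / rf (α + 1) b) /
          (∫ α in Set.Ioi (0 : ℝ), 1 / rf (α + 1) b) ≤
        Real.exp (-((x - x / Real.log b) / (1 + x / Real.log b))) := by
    intro b hb
    obtain ⟨n, rfl⟩ : ∃ n, b = n + 1 := ⟨b - 1, by omega⟩
    have hn : 2 ≤ n := by omega
    have hb3 : (3:ℝ) ≤ ((n+1 : ℕ):ℝ) := by exact_mod_cast hb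
    have hlogpos : 0 < Real.log ((n+1 : ℕ):ℝ) := Real.log_pos (by linarith)
    set t := x / Real.log ((n+1 : ℕ):ℝ) with htdef
    have ht : 0 < t := div_pos hx hlogpos
    have htl : t * Real.log ((n+1 : ℕ):ℝ) = x := div_mul_cancel₀ x hlogpos.ne'
    set A := ∫ s in Set.Ioc (0:ℝ) 1, 1 / rf (s+t+1) n with hAdef
    set B := ∫ s in Set.Ioc (0:ℝ) 1, 1 / rf (s+1) n with hBdef
    have hrf2 : 0 < rf 2 n := rf_pos two_pos n
    have hBpos : 0 < B := lt_of_lt_of_le (by positivity) (B_lower n)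
    have hn0 : (0:ℝ) < n := by exact_mod_cast (by omega : 0 < n)
    -- numerator identity
    have hN : (n:ℝ) * ∫ α in Set.Ioi t, 1 / rf (α+1) (n+1) = A := by
      rw [key_integral hn ht.le]
      have hshift := shift_Ioc (fun β => 1 / rf (β+1) n) 0 1 t
      rw [show (0:ℝ)+t = t by ring, show (1:ℝ)+t = t+1 by ring] at hshift
      rw [hAdef, ← hshift]
    have hD : (n:ℝ) * ∫ α in Set.Ioi (0:ℝ), 1 / rf (α+1) (n+1) = B := by
      rw [key_integral hn le_rfl, show (0:ℝ)+1 = 1 by ring]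
    have eN : ∫ α in Set.Ioi t, 1 / rf (α+1) (n+1) = A / n := by
      field_simp
      linarith [hN]
    have eD : ∫ α in Set.Ioi (0:ℝ), 1 / rf (α+1) (n+1) = B / n := by
      field_simp
      linarith [hD]
    have hcast : ((n+1 : ℕ):ℝ) = (n:ℝ) + 1 := by push_cast; ring
    have hratio :
        (∫ α in Set.Ioi (x / Real.log ((n+1:ℕ):ℝ)), 1 / rf (α + 1) (n+1)) /
          (∫ α in Set.Ioi (0 : ℝ), 1 / rf (α + 1) (n+1)) = A / B := by
      rw [← htdef, eN, eD, div_div_div_comm, div_self hn0.ne', div_one]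
    rw [hratio]
    -- sums
    set H1 := ∑ i ∈ Finset.range n, ((i:ℝ)+1)⁻¹ with hH1
    set H2 := ∑ i ∈ Finset.range n, ((i:ℝ)+2)⁻¹ with hH2
    have hH1le : H1 ≤ 1 + Real.log ((n+1:ℕ):ℝ) := by
      refine (Hsum_le n).trans ?_
      have : Real.log (n:ℝ) ≤ Real.log ((n+1:ℕ):ℝ) := by
        apply Real.log_le_log (by exact_mod_cast (by omega : 0 < n))
        push_cast; linarith
      linarith
    have hH2ge : Real.log ((n+1:ℕ):ℝ) - 1 ≤ H2 := by
      rw [hH2, Hsum_shift n]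
      have h := Hsum_ge (n+1)
      have hmono : Real.log ((n:ℝ)+1) ≤ Real.log ((n:ℝ)+1+1) :=
        Real.log_le_log (by positivity) (by linarith)
      push_cast at h ⊢
      linarith [h, hmono]
    constructor
    · -- lower bound
      have step1 : Real.exp (-x - t) ≤ Real.exp (-(t * H1)) := by
        apply Real.exp_le_exp.mpr
        have : t * H1 ≤ t * (1 + Real.log ((n+1:ℕ):ℝ)) :=
          mul_le_mul_of_nonneg_left hH1le ht.le
        rw [mul_add, mul_one, htl] at this
        linarith
      have step2 : Real.exp (-(t * H1)) ≤ rf 1 n / rf (t+1) n := L_est ht.le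
      have step3 : rf 1 n / rf (t+1) n ≤ A / B :=
        (le_div_iff₀ hBpos).mpr (A_lower ht.le)
      exact le_trans (le_trans step1 step2) step3
    · -- upper bound
      have step3 : A / B ≤ rf 2 n / rf (t+2) n :=
        (div_le_iff₀ hBpos).mpr (A_upper ht.le)
      have step2 : rf 2 n / rf (t+2) n ≤ Real.exp (-(t/(1+t) * H2)) := U_est ht.le
      have step1 : Real.exp (-(t/(1+t) * H2)) ≤ Real.exp (-((x - t) / (1 + t))) := by
        apply Real.exp_le_exp.mpr
        have h1t : (0:ℝ) < 1 + t := by linarith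
        have hmul : t/(1+t) * (Real.log ((n+1:ℕ):ℝ) - 1) ≤ t/(1+t) * H2 :=
          mul_le_mul_of_nonneg_left hH2ge (by positivity)
        have htl' := htl
        rw [hcast] at htl'
        have heq : t/(1+t) * (Real.log ((n+1:ℕ):ℝ) - 1) = (x - t) / (1 + t) := by
          rw [hcast]
          field_simp
          linarith [htl']
        linarith [hmul, heq.symm.le, heq.le]
      exact le_trans (le_trans step3 step2) step1
  apply tendsto_of_tendsto_of_tendsto_of_le_of_le' hlow hupp
  · filter_upwards [eventually_ge_atTop 3] with b hb
    exact (main b hb).1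
  · filter_upwards [eventually_ge_atTop 3] with b hb
    exact (main b hb).2
end
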